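/- arXiv:2211.10276 — 2 statements merged into one kernel-verified Lean document; each statement's English description precedes it below -/
import Mathlib

section
/- In the grammar of the previous statement, for a word w over the alphabet {a_1^{±1},...,a_n^{±1}} and i ∈ {1,...,n}: A_i derives w if and only if (1) w evaluates to a_i in F_n, and (2) no proper nonempty initial segment of w evaluates to a_i in F_n. -/
open ContextFreeGrammar

instance {T N : Type} [DecidableEq T] [DecidableEq N] :
    DecidableEq (ContextFreeRule T N) := fun a b =>
  decidable_of_iff (a.input = b.input ∧ a.output = b.output)
    (by cases a; cases b; simp)

/-- The formal inverse of a letter: `(i, b)` stands for `aᵢ` if `b = true` and for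
`aᵢ⁻¹` if `b = false`. -/
def letterInv {n : ℕ} (c : Fin n × Bool) : Fin n × Bool := (c.1, !c.2)

/-- Nonterminals: `none` is the initial symbol `S`; `some t` is the nonterminal `N_t`
(`A_i` when `t = aᵢ`, `Ā_i` when `t = aᵢ⁻¹`) that derives exactly the words evaluating
to the letter `t` with no proper initial segment evaluating to `t`. -/
abbrev TrivNT (n : ℕ) : Type := Option (Fin n × Bool)

/-- The production rules `S → ε`, `S → c N_{c⁻¹} S` (for every letter `c`),
`N_t → t`, and `N_t → c N_{c⁻¹} N_t` (for every letter `c ≠ t`); this is exactly the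
grammar `S → ε | a_j Ā_j S | ā_j A_j S`, `A_i → a_i | ā_i A_i A_i | a_j Ā_j A_i (j ≠ i)
| ā_j A_j A_i`, `Ā_i → ā_i | a_i Ā_i Ā_i | a_j Ā_j Ā_i | ā_j A_j Ā_i (j ≠ i)`. -/
noncomputable def trivRules (n : ℕ) : List (ContextFreeRule (Fin n × Bool) (TrivNT n)) :=
  [(⟨none, []⟩ : ContextFreeRule (Fin n × Bool) (TrivNT n))] ++
    ((Finset.univ : Finset (Fin n × Bool)).toList.map fun c =>
      ⟨none, [Symbol.terminal c, Symbol.nonterminal (some (letterInv c)),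
        Symbol.nonterminal none]⟩) ++
    ((Finset.univ : Finset (Fin n × Bool)).toList.map fun t =>
      ⟨some t, [Symbol.terminal t]⟩) ++
    (((Finset.univ : Finset ((Fin n × Bool) × (Fin n × Bool)))).toList.filterMap
      fun tc =>
        if tc.2 = tc.1 then none else
          some ⟨some tc.1, [Symbol.terminal tc.2,
            Symbol.nonterminal (some (letterInv tc.2)), Symbol.nonterminal (some tc.1)]⟩)

/-- The grammar of the paper for the language of all words representing `1 ∈ Fₙ`. -/
noncomputable def trivGrammar (n : ℕ) : ContextFreeGrammar (Fin n × Bool) :=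
  ⟨TrivNT n, none, (trivRules n).toFinset⟩

/-!
Read a word as a path in the Cayley graph of `Fₙ`, which is a tree. A path that first reaches
the letter `t` at its end is either `t` itself, or it starts with a letter `c ≠ t`; the rest then
leads from `c` to `t`, and since the geodesic from `c` to `t` passes through `1`, it reaches
`c · c⁻¹ = 1` on the way. Cutting at the first such visit writes the word as `c u v`, where `u`
first reaches `c⁻¹` at its end and `v` first reaches `t` at its end; conversely every such
concatenation first reaches `t` at its end. This is the recursion `N_t → t | c N_{c⁻¹} N_t` of the
grammar, so induction on the length of the word identifies the two languages.
-/
namespace List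

variable {β : Type*}

theorem prefix_append_iff {p u v : List β} :
    p <+: u ++ v ↔ p <+: u ∨ ∃ v', p = u ++ v' ∧ v' <+: v := by
  constructor
  · rintro ⟨r, hr⟩
    rcases append_eq_append_iff.mp hr with ⟨a, hu, -⟩ | ⟨c, hp, hv⟩
    · exact Or.inl ⟨a, hu.symm⟩
    · exact Or.inr ⟨c, hp, r, hv.symm⟩
  · rintro (h | ⟨v', rfl, h⟩)
    · exact h.trans (prefix_append u v)
    · exact (prefix_append_right_inj u).mpr h

theorem exists_shortest_prefix {P : List β → Prop} {w : List β} (h : ∃ p, p <+: w ∧ P p) :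
    ∃ u v, w = u ++ v ∧ P u ∧ ∀ p, p <+: u → p ≠ u → ¬P p := by
  classical
  have hk : ∃ k, P (w.take k) := by
    obtain ⟨p, hp, hP⟩ := h
    exact ⟨p.length, prefix_iff_eq_take.mp hp ▸ hP⟩
  refine ⟨w.take (Nat.find hk), w.drop (Nat.find hk), (take_append_drop _ _).symm,
    Nat.find_spec hk, fun p hp hne hP => ?_⟩
  have hlt : p.length < Nat.find hk :=
    (lt_of_le_of_ne hp.length_le (mt hp.eq_of_length hne)).trans_le (length_take_le _ _)
  exact Nat.find_min hk hlt (prefix_iff_eq_take.mp (hp.trans (take_prefix _ _)) ▸ hP)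

end List

namespace FreeGroup

variable {α : Type*}

theorem mk_cons (a : α × Bool) (L : List (α × Bool)) : mk (a :: L) = mk [a] * mk L :=
  (mul_mk (L₁ := [a]) (L₂ := L)).symm

theorem inv_mk_singleton (a : α × Bool) : (mk [a])⁻¹ = mk [(a.1, !a.2)] :=
  inv_mk

theorem mk_singleton_ne_one (a : α × Bool) : mk [a] ≠ 1 := by
  obtain ⟨x, _ | _⟩ := a
  · exact inv_ne_one.mpr (of_ne_one x)
  · exact of_ne_one x

theorem mk_cons_eq_iff {a : α × Bool} {p : List (α × Bool)} {g : FreeGroup α} :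
    mk (a :: p) = g ↔ mk p = mk [(a.1, !a.2)] * g := by
  rw [mk_cons, ← inv_mk_singleton, eq_inv_mul_iff_mul_eq]

theorem mk_cons_append_of_mk_eq {a : α × Bool} {u : List (α × Bool)}
    (hu : mk u = mk [(a.1, !a.2)]) (v : List (α × Bool)) : mk (a :: (u ++ v)) = mk v := by
  rw [mk_cons, ← mul_mk, ← mul_assoc, hu, ← inv_mk_singleton, mul_inv_cancel, one_mul]

theorem isReduced_pair_of_ne {a b : α × Bool} (hab : a ≠ b) : IsReduced [(a.1, !a.2), b] := by
  obtain ⟨a1, a2⟩ := a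
  obtain ⟨b1, b2⟩ := b
  cases a2 <;> cases b2 <;> simp_all [isReduced_cons_cons, IsReduced.singleton]

variable [DecidableEq α]

/-- The path `z` in the Cayley tree visits every vertex of the geodesic from `1` to `mk z`. -/
theorem exists_prefix_mk_eq_of_prefix_reduce {z p : List (α × Bool)} (h : p <+: reduce z) :
    ∃ z₀, z₀ <+: z ∧ mk z₀ = mk p := by
  induction z generalizing p with
  | nil => exact ⟨[], List.nil_prefix, by rw [List.prefix_nil.mp h]⟩
  | cons x z ih =>
    rcases eq_or_ne p [] with rfl | hp
    · exact ⟨[], List.nil_prefix, rfl⟩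
    obtain ⟨q, hq, hpq⟩ : ∃ q, q <+: reduce z ∧ mk p = mk (x :: q) := by
      rw [reduce.cons] at h
      rcases hz : reduce z with _ | ⟨y, r⟩
      · rw [hz] at h
        obtain ⟨t, rfl, ht⟩ := (List.prefix_cons_iff.mp h).resolve_left hp
        exact ⟨[], List.nil_prefix, by rw [List.prefix_nil.mp ht]⟩
      · rw [hz] at h
        dsimp only at h
        split_ifs at h with hc
        · obtain rfl : y = (x.1, !x.2) := Prod.ext hc.1.symm (by rw [hc.2, Bool.not_not])
          refine ⟨_ :: p, List.cons_prefix_cons.mpr ⟨rfl, h⟩, ?_⟩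
          rw [mk_cons x, mk_cons _ p, ← inv_mk_singleton, mul_inv_cancel_left]
        · obtain ⟨t, rfl, ht⟩ := (List.prefix_cons_iff.mp h).resolve_left hp
          exact ⟨t, ht, rfl⟩
    obtain ⟨z₀, hz₀, hmk⟩ := ih hq
    exact ⟨x :: z₀, List.cons_prefix_cons.mpr ⟨rfl, hz₀⟩, by rw [hpq, mk_cons, hmk, ← mk_cons]⟩

theorem exists_prefix_ne_mk_eq_of_isReduced_append {L M q : List (α × Bool)}
    (hLM : IsReduced (L ++ M)) (hM : M ≠ []) (hq : mk q = mk (L ++ M)) :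
    ∃ p, p <+: q ∧ p ≠ q ∧ mk p = mk L := by
  obtain ⟨p, hp, hmk⟩ := exists_prefix_mk_eq_of_prefix_reduce (z := q) (p := L)
    (by rw [reduce.sound hq, hLM.reduce_eq]; exact List.prefix_append L M)
  refine ⟨p, hp, ?_, hmk⟩
  rintro rfl
  have hred := reduce.sound (hmk.symm.trans hq)
  rw [(hLM.infix (List.prefix_append L M).isInfix).reduce_eq, hLM.reduce_eq] at hred
  exact hM (by simpa using hred)

end FreeGroup

open FreeGroup

def IsFirstPassage {α : Type*} (g : FreeGroup α) (w : List (α × Bool)) : Prop :=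
  mk w = g ∧ ∀ p, p <+: w → p ≠ [] → p ≠ w → mk p ≠ g

namespace IsFirstPassage

variable {α : Type*}

theorem singleton (a : α × Bool) : IsFirstPassage (mk [a]) [a] := by
  refine ⟨rfl, fun p hp hne hne' => ?_⟩
  obtain ⟨t, rfl, ht⟩ := (List.prefix_cons_iff.mp hp).resolve_left hne
  exact absurd (by rw [List.prefix_nil.mp ht]) hne'

variable [DecidableEq α]

theorem cons_append {a b : α × Bool} (hab : a ≠ b) {u v : List (α × Bool)}
    (hu : IsFirstPassage (mk [(a.1, !a.2)]) u) (hv : IsFirstPassage (mk [b]) v) :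
    IsFirstPassage (mk [b]) (a :: (u ++ v)) := by
  refine ⟨by rw [mk_cons_append_of_mk_eq hu.1, hv.1], fun p hp hne hne' => ?_⟩
  obtain ⟨p', rfl, hp'⟩ := (List.prefix_cons_iff.mp hp).resolve_left hne
  rcases List.prefix_append_iff.mp hp' with hpu | ⟨v', rfl, hv'⟩
  · rw [Ne, mk_cons_eq_iff, mul_mk]
    intro hmk
    obtain ⟨r, hr, hrp, hrmk⟩ :=
      exists_prefix_ne_mk_eq_of_isReduced_append (isReduced_pair_of_ne hab) (List.cons_ne_nil _ _)
        hmk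
    refine hu.2 r (hr.trans hpu) ?_ ?_ hrmk
    · rintro rfl
      exact mk_singleton_ne_one _ hrmk.symm
    · rintro rfl
      exact hrp (hr.eq_of_length (le_antisymm hr.length_le hpu.length_le))
  · rw [mk_cons_append_of_mk_eq hu.1]
    rcases eq_or_ne v' [] with rfl | hv'ne
    · exact (mk_singleton_ne_one b).symm
    · exact hv.2 v' hv' hv'ne (by rintro rfl; exact hne' rfl)

theorem eq_singleton_or_cons_append {b : α × Bool} {w : List (α × Bool)}
    (hw : IsFirstPassage (mk [b]) w) :
    w = [b] ∨ ∃ a u v, a ≠ b ∧ w = a :: (u ++ v) ∧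
      IsFirstPassage (mk [(a.1, !a.2)]) u ∧ IsFirstPassage (mk [b]) v := by
  rcases w with _ | ⟨a, w'⟩
  · exact absurd hw.1.symm (mk_singleton_ne_one b)
  by_cases hab : a = b
  · subst hab
    by_contra hne
    exact hw.2 [a] (List.cons_prefix_cons.mpr ⟨rfl, List.nil_prefix⟩) (List.cons_ne_nil _ _)
      (fun h => hne (Or.inl h.symm)) rfl
  right
  have hw' : mk w' = mk ([(a.1, !a.2)] ++ [b]) :=
    (mk_cons_eq_iff.mp hw.1).trans mul_mk
  obtain ⟨p, hp, -, hp_mk⟩ :=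
    exists_prefix_ne_mk_eq_of_isReduced_append (isReduced_pair_of_ne hab) (List.cons_ne_nil _ _) hw'
  obtain ⟨u, v, rfl, hu, hmin⟩ :=
    List.exists_shortest_prefix (P := fun p => mk p = mk [(a.1, !a.2)]) ⟨p, hp, hp_mk⟩
  have hv : mk v = mk [b] := by rw [← mk_cons_append_of_mk_eq hu, hw.1]
  refine ⟨a, u, v, hab, rfl, ⟨hu, fun p hp _ hne => hmin p hp hne⟩,
    ⟨hv, fun v' hv' hne hne' hmk => ?_⟩⟩
  refine hw.2 (a :: (u ++ v'))
    (List.cons_prefix_cons.mpr ⟨rfl, (List.prefix_append_right_inj u).mpr hv'⟩)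
    (List.cons_ne_nil _ _) (by simpa using hne') ?_
  rw [mk_cons_append_of_mk_eq hu, hmk]

end IsFirstPassage

theorem isFirstPassage_mk_singleton_iff {α : Type*} [DecidableEq α] {b : α × Bool}
    {w : List (α × Bool)} :
    IsFirstPassage (mk [b]) w ↔ w = [b] ∨ ∃ a u v, a ≠ b ∧ w = a :: (u ++ v) ∧
      IsFirstPassage (mk [(a.1, !a.2)]) u ∧ IsFirstPassage (mk [b]) v := by
  refine ⟨IsFirstPassage.eq_singleton_or_cons_append, ?_⟩
  rintro (rfl | ⟨a, u, v, hab, rfl, hu, hv⟩)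
  exacts [IsFirstPassage.singleton b, hu.cons_append hab hv]

namespace ContextFreeRule

variable {T N : Type*} {r : ContextFreeRule T N}

theorem Rewrites.append_cases {u v w : List (Symbol T N)} (h : r.Rewrites (u ++ v) w) :
    (∃ u', r.Rewrites u u' ∧ w = u' ++ v) ∨ ∃ v', r.Rewrites v v' ∧ w = u ++ v' := by
  induction u generalizing w with
  | nil => exact Or.inr ⟨w, h, rfl⟩
  | cons x u ih =>
    cases h with
    | head s => exact Or.inl ⟨r.output ++ u, .head u, by simp⟩
    | cons _ h =>
      rcases ih h with ⟨u', hu, rfl⟩ | ⟨v', hv, rfl⟩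
      · exact Or.inl ⟨x :: u', hu.cons x, rfl⟩
      · exact Or.inr ⟨v', hv, rfl⟩

end ContextFreeRule

namespace ContextFreeGrammar

variable {T : Type*} {g : ContextFreeGrammar T} {u v w : List (Symbol T g.NT)}

theorem Produces.append_cases (h : g.Produces (u ++ v) w) :
    (∃ u', g.Produces u u' ∧ w = u' ++ v) ∨ ∃ v', g.Produces v v' ∧ w = u ++ v' := by
  obtain ⟨r, hr, hrw⟩ := h
  exact hrw.append_cases.imp (fun ⟨u', h, e⟩ => ⟨u', ⟨r, hr, h⟩, e⟩)
    (fun ⟨v', h, e⟩ => ⟨v', ⟨r, hr, h⟩, e⟩)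

theorem derives_append_iff :
    g.Derives (u ++ v) w ↔ ∃ u' v', w = u' ++ v' ∧ g.Derives u u' ∧ g.Derives v v' := by
  constructor
  · intro h
    induction h with
    | refl => exact ⟨u, v, rfl, .refl u, .refl v⟩
    | tail _ hp ih =>
      obtain ⟨u', v', rfl, hu, hv⟩ := ih
      rcases hp.append_cases with ⟨u'', hu', rfl⟩ | ⟨v'', hv', rfl⟩
      · exact ⟨u'', v', rfl, hu.trans_produces hu', hv⟩
      · exact ⟨u', v'', rfl, hu, hv.trans_produces hv'⟩
  · rintro ⟨u', v', rfl, hu, hv⟩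
    exact (hu.append_right v).trans (hv.append_left u')

theorem derives_map_terminal_iff {x y : List T} :
    g.Derives (x.map .terminal) (y.map .terminal) ↔ y = x := by
  refine ⟨fun h => ?_, by rintro rfl; rfl⟩
  rcases h.eq_or_head with h | ⟨_, hp, -⟩
  · exact (List.map_injective_iff.mpr (fun _ _ => Symbol.terminal.inj) h).symm
  · obtain ⟨r, -, hr⟩ := hp.exists_nonterminal_input_mem
    simp at hr

theorem derives_append_map_terminal_iff {y : List T} :
    g.Derives (u ++ v) (y.map .terminal) ↔ ∃ y₁ y₂, y = y₁ ++ y₂ ∧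
      g.Derives u (y₁.map .terminal) ∧ g.Derives v (y₂.map .terminal) := by
  rw [derives_append_iff]
  constructor
  · rintro ⟨u', v', h, hu, hv⟩
    obtain ⟨y₁, y₂, rfl, rfl, rfl⟩ := List.map_eq_append_iff.mp h
    exact ⟨y₁, y₂, rfl, hu, hv⟩
  · rintro ⟨y₁, y₂, rfl, hu, hv⟩
    exact ⟨_, _, List.map_append .., hu, hv⟩

theorem derives_nonterminal_map_terminal_iff {A : g.NT} {y : List T} :
    g.Derives [.nonterminal A] (y.map .terminal) ↔
      ∃ r ∈ g.rules, r.input = A ∧ g.Derives r.output (y.map .terminal) := by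
  constructor
  · intro h
    rcases h.eq_or_head with h | ⟨_, ⟨r, hr, hrw⟩, hv⟩
    · cases y <;> simp at h
    · cases hrw with
      | head s => exact ⟨r, hr, rfl, by simpa using hv⟩
      | cons _ h => exact absurd h.nonterminal_input_mem List.not_mem_nil
  · rintro ⟨r, hr, rfl, h⟩
    exact Produces.trans_derives ⟨r, hr, .input_output⟩ h

end ContextFreeGrammar

section TrivGrammar

variable {n : ℕ}

theorem mem_trivGrammar_rules_of_input_eq_some {r : ContextFreeRule (Fin n × Bool) (TrivNT n)}
    {t : Fin n × Bool} (hr : r.input = some t) :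
    r ∈ (trivGrammar n).rules ↔ r.output = [.terminal t] ∨ ∃ c, c ≠ t ∧
      r.output = [.terminal c, .nonterminal (some (letterInv c)), .nonterminal (some t)] := by
  obtain ⟨A, out⟩ := r
  subst hr
  refine List.mem_toFinset.trans ?_
  simp only [trivRules, List.cons_append, List.nil_append, eq_comm, List.append_assoc,
    List.mem_cons, ContextFreeRule.mk.injEq, reduceCtorEq, false_and, List.mem_append,
    List.mem_map, Finset.mem_toList, Finset.mem_univ, and_false, exists_false, Option.some.injEq,
    true_and, exists_eq_left', List.mem_filterMap, Option.some_eq_ite_none_left, false_or, ne_eq]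
  refine or_congr_right ⟨?_, ?_⟩
  · rintro ⟨⟨t', c⟩, hne, rfl, e⟩
    exact ⟨c, hne, e⟩
  · rintro ⟨c, hne, e⟩
    exact ⟨(t, c), hne, rfl, e⟩

theorem trivGrammar_derives_iff {t : Fin n × Bool} {w : List (Fin n × Bool)} :
    (trivGrammar n).Derives [.nonterminal (some t)] (w.map .terminal) ↔
      w = [t] ∨ ∃ c u v, c ≠ t ∧ w = c :: (u ++ v) ∧
        (trivGrammar n).Derives [.nonterminal (some (letterInv c))] (u.map .terminal) ∧
        (trivGrammar n).Derives [.nonterminal (some t)] (v.map .terminal) := by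
  refine derives_nonterminal_map_terminal_iff.trans ⟨?_, ?_⟩
  · rintro ⟨r, hr, hin, hd⟩
    rcases (mem_trivGrammar_rules_of_input_eq_some hin).mp hr with h | ⟨c, hct, h⟩ <;>
      rw [h] at hd
    · exact Or.inl (derives_map_terminal_iff (x := [t]).mp hd)
    · obtain ⟨y, uv, rfl, hc, huv⟩ := (derives_append_map_terminal_iff
        (u := [.terminal c]) (v := [.nonterminal _, .nonterminal _])).mp hd
      obtain ⟨u, v, rfl, hu, hv⟩ := (derives_append_map_terminal_iff
        (u := [.nonterminal _]) (v := [.nonterminal _])).mp huv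
      obtain rfl := derives_map_terminal_iff (x := [c]).mp hc
      exact Or.inr ⟨c, u, v, hct, rfl, hu, hv⟩
  · rintro (rfl | ⟨c, u, v, hct, rfl, hu, hv⟩)
    · exact ⟨⟨some t, [.terminal t]⟩, (mem_trivGrammar_rules_of_input_eq_some rfl).mpr
        (Or.inl rfl), rfl, .refl _⟩
    · refine ⟨⟨some t, [.terminal c, .nonterminal (some (letterInv c)), .nonterminal (some t)]⟩,
        (mem_trivGrammar_rules_of_input_eq_some rfl).mpr (Or.inr ⟨c, hct, rfl⟩), rfl, ?_⟩
      exact (derives_append_map_terminal_iff (u := [.terminal c])).mpr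
        ⟨[c], u ++ v, rfl, .refl _, derives_append_map_terminal_iff.mpr ⟨u, v, rfl, hu, hv⟩⟩

theorem trivGrammar_derives_iff_isFirstPassage (t : Fin n × Bool) (w : List (Fin n × Bool)) :
    (trivGrammar n).Derives [.nonterminal (some t)] (w.map .terminal) ↔
      IsFirstPassage (mk [t]) w := by
  rw [trivGrammar_derives_iff, isFirstPassage_mk_singleton_iff]
  refine or_congr_right (exists_congr fun c => exists_congr fun u => exists_congr fun v =>
    and_congr_right fun _ => and_congr_right fun hw => ?_)
  rw [trivGrammar_derives_iff_isFirstPassage (letterInv c) u,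
    trivGrammar_derives_iff_isFirstPassage t v]
  rfl
termination_by w.length
decreasing_by all_goals subst hw; simp only [List.length_cons, List.length_append]; omega

end TrivGrammar

/-- In the grammar above, the nonterminal `A_i` (encoded `some (i, true)`) derives a word
`w` if and only if `w` evaluates to `aᵢ` in the free group `Fₙ` and no proper nonempty
initial segment of `w` evaluates to `aᵢ`. -/
theorem stmt9 (n : ℕ) (i : Fin n) (w : List (Fin n × Bool)) :
    (trivGrammar n).Derives
        [Symbol.nonterminal (some (i, true) : TrivNT n)] (w.map Symbol.terminal) ↔
      (FreeGroup.mk w = FreeGroup.of i ∧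
        ∀ w' : List (Fin n × Bool), w' <+: w → w' ≠ [] → w' ≠ w →
          FreeGroup.mk w' ≠ FreeGroup.of i) :=
  trivGrammar_derives_iff_isFirstPassage (i, true) w
end

section
/- Suppose H ≤ F_n has rank at least 2 and the degree set D_g of the ideal I_g is nonempty. If D_g contains an odd number d, then every integer ≥ 3d lies in D_g^{ex}; if D_g contains only even numbers and d ∈ D_g, then every even integer ≥ 2d lies in D_g^{ex}. In particular, D_g \ D_g^{ex} is finite. -/
/-- The number of occurrences of `x` and `x⁻¹` in a word over the basis
`h₁,…,h_r,x` (encoded as `Fin r ⊕ Unit`, with `Sum.inr ()` being `x`) of `H * ⟨x⟩`. -/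
def xcount {r : ℕ} (w : List ((Fin r ⊕ Unit) × Bool)) : ℕ :=
  w.countP fun l => match l.1 with | Sum.inr _ => true | Sum.inl _ => false

/-- A word is cyclically reduced iff its double is a reduced word. -/
def CyclicallyReduced {r : ℕ} (w : List ((Fin r ⊕ Unit) × Bool)) : Prop :=
  FreeGroup.reduce (w ++ w) = w ++ w

/-- `rhoD φ d M` counts the cyclically reduced words of length at most `M` over the basis
of `H * ⟨x⟩` that represent an equation in `I_g = ker φ` of degree `d`. -/
noncomputable def rhoD {n r : ℕ} (φ : FreeGroup (Fin r ⊕ Unit) →* FreeGroup (Fin n))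
    (d M : ℕ) : ℕ :=
  Set.ncard { w : List ((Fin r ⊕ Unit) × Bool) |
    w.length ≤ M ∧ CyclicallyReduced w ∧ xcount w = d ∧ FreeGroup.mk w ∈ MonoidHom.ker φ }

/-- `rho φ M` counts the cyclically reduced words of length at most `M` representing an
equation in `I_g = ker φ`. -/
noncomputable def rho {n r : ℕ} (φ : FreeGroup (Fin r ⊕ Unit) →* FreeGroup (Fin n))
    (M : ℕ) : ℕ :=
  Set.ncard { w : List ((Fin r ⊕ Unit) × Bool) |
    w.length ≤ M ∧ CyclicallyReduced w ∧ FreeGroup.mk w ∈ MonoidHom.ker φ }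

/-- A nondecreasing counting function has exponential growth if it is bounded between two
exponentials for all sufficiently large arguments. -/
def ExpGrowth (ρ : ℕ → ℕ) : Prop :=
  ∃ α β : ℝ, 0 < α ∧ 0 < β ∧ ∃ M₀ : ℕ, ∀ M : ℕ, M₀ ≤ M →
    Real.exp (α * M) ≤ (ρ M : ℝ) ∧ (ρ M : ℝ) ≤ Real.exp (β * M)

/-- The degree set `D_g`: the degrees of nontrivial equations in `I_g = ker φ`. -/
def degreeSet {n r : ℕ} (φ : FreeGroup (Fin r ⊕ Unit) →* FreeGroup (Fin n)) : Set ℕ :=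
  { d | ∃ w : List ((Fin r ⊕ Unit) × Bool), CyclicallyReduced w ∧ w ≠ [] ∧
      FreeGroup.mk w ∈ MonoidHom.ker φ ∧ xcount w = d }

/-- `D_g^{ex}`: the degrees `d ∈ D_g` for which `ρ_{g,d}` grows exponentially. -/
def degreeSetExp {n r : ℕ} (φ : FreeGroup (Fin r ⊕ Unit) →* FreeGroup (Fin n)) : Set ℕ :=
  { d ∈ degreeSet φ | ExpGrowth (rhoD φ d) }

/-!
Let `w, w'` be nontrivial cyclically reduced equations of degrees `d, d'`. For every `k` and every
positive word `t` in the basis of `H`, put `U = h₀ xᵏ t h₀ c`; then `U w U⁻¹ · c' w' c'⁻¹` is again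
an equation, of degree `d + d' + 2k`. Since `H` has at least four letters `hᵢ^{±1}`, the letters
`c, c'` can be chosen so that no cancellation occurs anywhere, even cyclically; the resulting words
are therefore pairwise distinct. Words `t` of length `L` give `r ^ L ≥ 2 ^ L` equations of length
`2L + O(1)`, and all words of length `≤ M` number at most exponentially many, so
`d + d' + 2k ∈ D_g^{ex}`. The remaining claims follow by writing `m` as `d + d + 2k` or, for odd
`m` and odd `d`, as `d + 2d + 2k`.
-/

namespace FreeGroup

variable {α : Type*} {L L₁ L₂ U V w w' : List (α × Bool)}

theorem isReduced_map_prodMk_right (L : List α) (b : Bool) : IsReduced (L.map (·, b)) :=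
  (List.isChain_map _).2 (List.pairwise_of_forall fun _ _ _ => rfl).isChain

theorem fst_eq_imp_snd_eq_iff {a b : α × Bool} : (a.1 = b.1 → a.2 = b.2) ↔ a ≠ (b.1, !b.2) := by
  obtain ⟨a, _ | _⟩ := a <;> obtain ⟨b, _ | _⟩ := b <;> simp

theorem IsReduced.invRev (h : IsReduced L) : IsReduced (invRev L) := by
  rw [IsReduced, FreeGroup.invRev, List.isChain_reverse, List.isChain_map]
  exact h.imp fun a b hab heq => by simpa using (hab heq.symm).symm

theorem head?_invRev : (invRev L).head? = L.getLast?.map fun a => (a.1, !a.2) := by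
  simp [FreeGroup.invRev, List.head?_reverse, List.getLast?_map]

theorem getLast?_invRev : (invRev L).getLast? = L.head?.map fun a => (a.1, !a.2) := by
  simp [FreeGroup.invRev, List.getLast?_reverse]

theorem IsReduced.append_invRev (h₁ : IsReduced L₁) (h₂ : IsReduced L₂)
    (h : ∀ a ∈ L₁.getLast?, ∀ b ∈ L₂.getLast?, a ≠ b) : IsReduced (L₁ ++ FreeGroup.invRev L₂) := by
  refine List.isChain_append.2 ⟨h₁, h₂.invRev, fun a ha b hb => ?_⟩
  rw [head?_invRev, Option.mem_map] at hb
  obtain ⟨b, hb, rfl⟩ := hb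
  exact fst_eq_imp_snd_eq_iff.2 (by simpa using h a ha b hb)

theorem IsReduced.cons (h : IsReduced L) {a : α × Bool} (ha : ∀ b ∈ L.head?, a ≠ (b.1, !b.2)) :
    IsReduced (a :: L) :=
  List.isChain_cons.2 ⟨fun b hb => fst_eq_imp_snd_eq_iff.2 (ha b hb), h⟩

theorem isReduced_append_self_iff : IsReduced (L ++ L) ↔ IsCyclicallyReduced L := by
  rw [IsReduced, List.isChain_append, isCyclicallyReduced_iff, IsReduced]
  tauto

def conjWord (U w : List (α × Bool)) : List (α × Bool) := U ++ w ++ invRev U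

theorem mk_conjWord_mem {N : Subgroup (FreeGroup α)} [N.Normal] (h : mk w ∈ N) :
    mk (conjWord U w) ∈ N := by
  rw [conjWord, ← mul_mk, ← mul_mk, ← inv_mk]
  exact Subgroup.Normal.conj_mem ‹_› _ h _

theorem head?_conjWord (hU : U ≠ []) : (conjWord U w).head? = U.head? := by
  obtain ⟨a, U, rfl⟩ := List.exists_cons_of_ne_nil hU
  rfl

theorem getLast?_conjWord (hU : U ≠ []) :
    (conjWord U w).getLast? = U.head?.map fun a => (a.1, !a.2) := by
  rw [conjWord, List.getLast?_append_of_ne_nil _ (by simpa [FreeGroup.invRev] using hU),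
    getLast?_invRev]

theorem isCyclicallyReduced_conjWord_append_conjWord (hU : U ≠ []) (hV : V ≠ [])
    (hUw : IsReduced (U ++ w)) (hVw : IsReduced (V ++ w'))
    (hw : ∀ a ∈ (U ++ w).getLast?, ∀ b ∈ U.getLast?, a ≠ b)
    (hw' : ∀ a ∈ (V ++ w').getLast?, ∀ b ∈ V.getLast?, a ≠ b)
    (hUV : ∀ a ∈ U.head?, ∀ b ∈ V.head?, a ≠ b) :
    IsCyclicallyReduced (conjWord U w ++ conjWord V w') := by
  have hUw' := hUw.append_invRev (hUw.infix ⟨[], w, rfl⟩) hw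
  have hVw' := hVw.append_invRev (hVw.infix ⟨[], w', rfl⟩) hw'
  refine ⟨List.isChain_append.2 ⟨hUw', hVw', fun a ha b hb => ?_⟩, fun a ha b hb => ?_⟩
  · rw [getLast?_conjWord hU, Option.mem_map] at ha
    rw [head?_conjWord hV] at hb
    obtain ⟨a, ha, rfl⟩ := ha
    have := hUV a ha b hb
    grind
  · rw [List.getLast?_append_of_ne_nil _ (by simp [conjWord, hV]), getLast?_conjWord hV,
      Option.mem_map] at ha
    rw [List.head?_append_of_ne_nil _ (by simp [conjWord, hU]), head?_conjWord hU] at hb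
    obtain ⟨a, ha, rfl⟩ := ha
    have := hUV b hb a ha
    grind

end FreeGroup

open FreeGroup

section Counting

theorem ncard_setOf_length_le_le {α : Type*} [Fintype α] (M : ℕ) :
    {l : List α | l.length ≤ M}.ncard ≤ (Fintype.card α + 1) ^ M := by
  have hinj : Set.InjOn (fun (l : List α) (i : Fin M) => l[i.1]?) {l | l.length ≤ M} := by
    intro l₁ h₁ l₂ h₂ h
    refine List.ext_getElem? fun i => ?_
    rcases lt_or_ge i M with hi | hi
    · exact congrFun h ⟨i, hi⟩
    · rw [List.getElem?_eq_none (h₁.trans hi), List.getElem?_eq_none (h₂.trans hi)]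
  calc {l : List α | l.length ≤ M}.ncard ≤ (Set.univ : Set (Fin M → Option α)).ncard :=
        Set.ncard_le_ncard_of_injOn _ (fun _ _ => Set.mem_univ _) hinj Set.finite_univ
    _ = (Fintype.card α + 1) ^ M := by simp [Fintype.card_option]

theorem expGrowth_of_le_of_le {ρ : ℕ → ℕ} (hρ : Monotone ρ) {b C : ℕ} (hb : 2 ≤ b)
    (hlow : ∀ L, 2 ^ L ≤ ρ (2 * L + C)) (hup : ∀ M, ρ M ≤ b ^ M) : ExpGrowth ρ := by
  have hlog2 : 0 < Real.log 2 := Real.log_pos one_lt_two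
  have hb' : (1 : ℝ) < b := by exact_mod_cast hb
  refine ⟨Real.log 2 / 4, Real.log b, by positivity, Real.log_pos hb', 2 * C + 2,
    fun M hM => ⟨?_, ?_⟩⟩
  · set L := (M - C) / 2
    have hML : (M : ℝ) ≤ 4 * L := by exact_mod_cast (by omega : M ≤ 4 * L)
    calc Real.exp (Real.log 2 / 4 * M) ≤ Real.exp (L * Real.log 2) :=
          Real.exp_le_exp.2 (by nlinarith)
      _ = (2 ^ L : ℕ) := by rw [Real.exp_nat_mul, Real.exp_log two_pos]; push_cast; rfl
      _ ≤ ρ M := by exact_mod_cast (hlow L).trans (hρ (by omega))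
  · calc (ρ M : ℝ) ≤ (b ^ M : ℕ) := by exact_mod_cast hup M
      _ = Real.exp (Real.log b * M) := by
        rw [mul_comm, Real.exp_nat_mul, Real.exp_log (by positivity)]; push_cast; rfl

end Counting

section Equations

variable {r : ℕ}

theorem cyclicallyReduced_iff_isCyclicallyReduced {w : List ((Fin r ⊕ Unit) × Bool)} :
    CyclicallyReduced w ↔ IsCyclicallyReduced w := by
  rw [CyclicallyReduced, ← isReduced_iff_reduce_eq, isReduced_append_self_iff]

theorem xcount_append (w w' : List ((Fin r ⊕ Unit) × Bool)) :
    xcount (w ++ w') = xcount w + xcount w' :=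
  List.countP_append ..

theorem xcount_conjWord (U w : List ((Fin r ⊕ Unit) × Bool)) :
    xcount (conjWord U w) = 2 * xcount U + xcount w := by
  have : xcount (invRev U) = xcount U := by
    simp [xcount, FreeGroup.invRev, List.countP_map, Function.comp_def]
  rw [conjWord, xcount_append, xcount_append, this]
  ring

abbrev hLetter (c : Fin r × Bool) : (Fin r ⊕ Unit) × Bool := (Sum.inl c.1, c.2)

theorem exists_hLetter_ne (hr : 2 ≤ r) (a b e : (Fin r ⊕ Unit) × Bool) :
    ∃ c, hLetter c ≠ a ∧ hLetter c ≠ b ∧ hLetter c ≠ e := by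
  have hinj : Function.Injective (hLetter (r := r)) := by
    rintro ⟨i, s⟩ ⟨j, t⟩ h
    simpa using h
  have hcard : ({a, b, e} : Finset _).card < (Finset.univ.image (hLetter (r := r))).card := by
    rw [Finset.card_image_of_injective _ hinj, Finset.card_univ, Fintype.card_prod,
      Fintype.card_fin, Fintype.card_bool]
    exact Finset.card_le_three.trans_lt (by omega)
  obtain ⟨_, hmem, hnot⟩ := Finset.exists_mem_notMem_of_card_lt_card hcard
  obtain ⟨c, -, rfl⟩ := Finset.mem_image.1 hmem
  simp only [Finset.mem_insert, Finset.mem_singleton, not_or] at hnot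
  exact ⟨c, hnot⟩

/-- `h₀ xᵏ t h₀ c` with `t` a positive word in the `hᵢ`; the two `h₀` fix the first letter and
keep `c` from cancelling against `t` or `xᵏ`. -/
def conjugator (i₀ : Fin r) (k : ℕ) (t : List (Fin r)) (c : Fin r × Bool) :
    List ((Fin r ⊕ Unit) × Bool) :=
  ((Sum.inl i₀ :: List.replicate k (Sum.inr ()) ++ t.map Sum.inl ++ [Sum.inl i₀]).map (·, true))
    ++ [hLetter c]

theorem length_conjugator (i₀ : Fin r) (k : ℕ) (t : List (Fin r)) (c : Fin r × Bool) :
    (conjugator i₀ k t c).length = t.length + k + 3 := by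
  simp [conjugator]
  omega

theorem xcount_conjugator (i₀ : Fin r) (k : ℕ) (t : List (Fin r)) (c : Fin r × Bool) :
    xcount (conjugator i₀ k t c) = k := by
  simp [conjugator, xcount, List.countP_append, List.countP_map, Function.comp_def,
    List.countP_replicate]

theorem isReduced_conjugator_append {i₀ : Fin r} {k : ℕ} {t : List (Fin r)} {c : Fin r × Bool}
    {w : List ((Fin r ⊕ Unit) × Bool)} (hw : IsReduced w) (hc₀ : hLetter c ≠ (Sum.inl i₀, false))
    (hcw : ∀ b ∈ w.head?, hLetter c ≠ (b.1, !b.2)) :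
    IsReduced (conjugator i₀ k t c ++ w) := by
  rw [conjugator, List.append_assoc, List.singleton_append]
  refine List.isChain_append.2 ⟨isReduced_map_prodMk_right _ true, hw.cons hcw,
    fun a ha b hb => ?_⟩
  simp only [List.map_append, List.map_cons, List.map_nil, List.getLast?_concat,
    Option.mem_some_iff, List.head?_cons] at ha hb
  subst ha hb
  refine fst_eq_imp_snd_eq_iff.2 fun h => hc₀ ?_
  obtain ⟨i, _ | _⟩ := c <;> simp_all

def equationWord (i₀ : Fin r) (k : ℕ) (c c' : Fin r × Bool)
    (w w' : List ((Fin r ⊕ Unit) × Bool)) (t : List (Fin r)) : List ((Fin r ⊕ Unit) × Bool) :=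
  conjWord (conjugator i₀ k t c) w ++ conjWord [hLetter c'] w'

section

variable {i₀ : Fin r} {k : ℕ} {c c' : Fin r × Bool} {w w' : List ((Fin r ⊕ Unit) × Bool)}

theorem length_equationWord (t : List (Fin r)) :
    (equationWord i₀ k c c' w w' t).length = 2 * t.length + (2 * k + 8 + w.length + w'.length) := by
  simp [equationWord, conjWord, FreeGroup.invRev, length_conjugator]
  omega

theorem xcount_equationWord (t : List (Fin r)) :
    xcount (equationWord i₀ k c c' w w' t) = xcount w + xcount w' + 2 * k := by
  simp only [equationWord, xcount_append, xcount_conjWord, xcount_conjugator]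
  simp [xcount]
  ring

theorem mk_equationWord_mem {N : Subgroup (FreeGroup (Fin r ⊕ Unit))} [N.Normal] (hw : mk w ∈ N)
    (hw' : mk w' ∈ N) (t : List (Fin r)) : mk (equationWord i₀ k c c' w w' t) ∈ N := by
  rw [equationWord, ← mul_mk]
  exact N.mul_mem (mk_conjWord_mem hw) (mk_conjWord_mem hw')

theorem equationWord_inj {t₁ t₂ : List (Fin r)} (hlen : t₁.length = t₂.length)
    (h : equationWord i₀ k c c' w w' t₁ = equationWord i₀ k c c' w w' t₂) : t₁ = t₂ := by
  simp only [equationWord, conjWord, conjugator, List.map_append, List.map_cons, List.map_map,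
    List.append_assoc, List.cons_append, List.cons.injEq, true_and, List.append_cancel_left_eq] at h
  exact List.map_injective_iff.2 (fun _ _ h => by simpa using h)
    (List.append_inj h (by simp [hlen])).1

theorem isCyclicallyReduced_equationWord (hw : IsReduced w) (hw' : IsReduced w') (hw0 : w ≠ [])
    (hw'0 : w' ≠ []) (hc₀ : hLetter c ≠ (Sum.inl i₀, false))
    (hcw : hLetter c ≠ ((w.head hw0).1, !(w.head hw0).2)) (hcw' : hLetter c ≠ w.getLast hw0)
    (hc'₀ : hLetter c' ≠ (Sum.inl i₀, true))
    (hc'w : hLetter c' ≠ ((w'.head hw'0).1, !(w'.head hw'0).2))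
    (hc'w' : hLetter c' ≠ w'.getLast hw'0)
    (t : List (Fin r)) :
    IsCyclicallyReduced (equationWord i₀ k c c' w w' t) := by
  refine isCyclicallyReduced_conjWord_append_conjWord (by simp [conjugator]) (List.cons_ne_nil _ _)
    (isReduced_conjugator_append hw hc₀ ?_) (hw'.cons ?_) ?_ ?_ ?_
  · simpa [List.head?_eq_some_head hw0] using hcw
  · simpa [List.head?_eq_some_head hw'0] using hc'w
  · simp only [List.getLast?_append_of_ne_nil _ hw0, List.getLast?_eq_some_getLast hw0, conjugator,
      List.getLast?_concat, Option.mem_some_iff]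
    rintro _ rfl _ rfl
    exact hcw'.symm
  · simp only [List.getLast?_append_of_ne_nil _ hw'0, List.getLast?_eq_some_getLast hw'0,
      List.getLast?_singleton, Option.mem_some_iff]
    rintro _ rfl _ rfl
    exact hc'w'.symm
  · simp only [conjugator, List.map_append, List.map_cons, List.cons_append, List.head?_cons,
      Option.mem_some_iff]
    rintro _ rfl _ rfl
    exact hc'₀.symm

end

end Equations

section DegreeSets

variable {n r : ℕ} {φ : FreeGroup (Fin r ⊕ Unit) →* FreeGroup (Fin n)}

theorem rhoD_mono (φ : FreeGroup (Fin r ⊕ Unit) →* FreeGroup (Fin n)) (d : ℕ) :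
    Monotone (rhoD φ d) := fun _ M' h =>
  Set.ncard_le_ncard (fun _ hw => ⟨hw.1.trans h, hw.2⟩)
    ((List.finite_length_le _ M').subset fun _ hw => hw.1)

theorem rhoD_le (φ : FreeGroup (Fin r ⊕ Unit) →* FreeGroup (Fin n)) (d M : ℕ) :
    rhoD φ d M ≤ (Fintype.card ((Fin r ⊕ Unit) × Bool) + 1) ^ M :=
  (Set.ncard_le_ncard (fun _ hw => hw.1) (List.finite_length_le _ M)).trans
    (ncard_setOf_length_le_le M)

theorem add_add_two_mul_mem_degreeSetExp (hr : 2 ≤ r) {d d' : ℕ} (hd : d ∈ degreeSet φ)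
    (hd' : d' ∈ degreeSet φ) (k : ℕ) : d + d' + 2 * k ∈ degreeSetExp φ := by
  obtain ⟨w, hw, hw0, hwφ, rfl⟩ := hd
  obtain ⟨w', hw', hw'0, hw'φ, rfl⟩ := hd'
  rw [cyclicallyReduced_iff_isCyclicallyReduced] at hw hw'
  let i₀ : Fin r := ⟨0, by omega⟩
  obtain ⟨c, hc₀, hcw, hcw'⟩ := exists_hLetter_ne hr (Sum.inl i₀, false)
    ((w.head hw0).1, !(w.head hw0).2) (w.getLast hw0)
  obtain ⟨c', hc'₀, hc'w, hc'w'⟩ := exists_hLetter_ne hr (Sum.inl i₀, true)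
    ((w'.head hw'0).1, !(w'.head hw'0).2) (w'.getLast hw'0)
  have hz : ∀ t, CyclicallyReduced (equationWord i₀ k c c' w w' t) ∧
      xcount (equationWord i₀ k c c' w w' t) = xcount w + xcount w' + 2 * k ∧
      mk (equationWord i₀ k c c' w w' t) ∈ φ.ker := fun t =>
    ⟨cyclicallyReduced_iff_isCyclicallyReduced.2 <| isCyclicallyReduced_equationWord hw.isReduced
      hw'.isReduced hw0 hw'0 hc₀ hcw hcw' hc'₀ hc'w hc'w' t,
    xcount_equationWord t, mk_equationWord_mem hwφ hw'φ t⟩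
  refine ⟨⟨equationWord i₀ k c c' w w' [], (hz []).1, by simp [equationWord, conjWord],
    (hz []).2.2, (hz []).2.1⟩, ?_⟩
  refine expGrowth_of_le_of_le (rhoD_mono φ _) (Nat.succ_le_succ Fintype.card_pos)
    (C := 2 * k + 8 + w.length + w'.length) (fun L => ?_) (rhoD_le φ _)
  calc 2 ^ L ≤ r ^ L := Nat.pow_le_pow_left hr L
    _ = (Set.univ : Set (Fin L → Fin r)).ncard := by simp
    _ ≤ _ := by
      unfold rhoD
      exact Set.ncard_le_ncard_of_injOn (fun f => equationWord i₀ k c c' w w' (List.ofFn f))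
        (fun f _ => ⟨by rw [length_equationWord, List.length_ofFn], hz _⟩)
        (fun _ _ _ _ h => List.ofFn_injective (equationWord_inj (by simp) h))
        ((List.finite_length_le _ _).subset fun _ hw => hw.1)

theorem mem_degreeSetExp_of_odd (hr : 2 ≤ r) {d : ℕ} (hd : d ∈ degreeSet φ) (hodd : Odd d)
    {m : ℕ} (hm : 3 * d ≤ m) : m ∈ degreeSetExp φ := by
  have h2d : 2 * d ∈ degreeSet φ := by
    simpa [two_mul] using (add_add_two_mul_mem_degreeSetExp hr hd hd 0).1
  obtain ⟨a, rfl⟩ := hodd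
  rcases Nat.even_or_odd m with ⟨p, rfl⟩ | ⟨p, rfl⟩
  · convert add_add_two_mul_mem_degreeSetExp hr hd hd (p - (2 * a + 1)) using 1
    omega
  · convert add_add_two_mul_mem_degreeSetExp hr hd h2d (p - 3 * a - 1) using 1
    omega

theorem mem_degreeSetExp_of_even (hr : 2 ≤ r) {d : ℕ} (hd : d ∈ degreeSet φ) {m : ℕ}
    (hm : Even m) (hdm : 2 * d ≤ m) : m ∈ degreeSetExp φ := by
  obtain ⟨p, rfl⟩ := hm
  convert add_add_two_mul_mem_degreeSetExp hr hd hd (p - d) using 1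
  omega

theorem finite_degreeSet_diff_degreeSetExp (hr : 2 ≤ r) :
    (degreeSet φ \ degreeSetExp φ).Finite := by
  by_cases hodd : ∃ d ∈ degreeSet φ, Odd d
  · obtain ⟨d, hd, hodd⟩ := hodd
    exact (Set.finite_lt_nat (3 * d)).subset fun m ⟨_, hm⟩ =>
      lt_of_not_ge fun h => hm (mem_degreeSetExp_of_odd hr hd hodd h)
  · push Not at hodd
    rcases (degreeSet φ).eq_empty_or_nonempty with h | ⟨d, hd⟩
    · simp [h]
    · exact (Set.finite_lt_nat (2 * d)).subset fun m ⟨hmD, hm⟩ => lt_of_not_ge fun h =>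
        hm (mem_degreeSetExp_of_even hr hd (Nat.not_odd_iff_even.1 (hodd m hmD)) h)

end DegreeSets

theorem stmt15_general {n r : ℕ} (hr : 2 ≤ r) (h : Fin r → FreeGroup (Fin n))
    (g : FreeGroup (Fin n)) :
    (∀ d ∈ degreeSet (FreeGroup.lift (Sum.elim h fun _ => g)), Odd d →
        ∀ m : ℕ, 3 * d ≤ m → m ∈ degreeSetExp (FreeGroup.lift (Sum.elim h fun _ => g))) ∧
    ((∀ d ∈ degreeSet (FreeGroup.lift (Sum.elim h fun _ => g)), Even d) →
        ∀ d ∈ degreeSet (FreeGroup.lift (Sum.elim h fun _ => g)), ∀ m : ℕ, Even m →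
          2 * d ≤ m → m ∈ degreeSetExp (FreeGroup.lift (Sum.elim h fun _ => g))) ∧
    (degreeSet (FreeGroup.lift (Sum.elim h fun _ => g)) \
      degreeSetExp (FreeGroup.lift (Sum.elim h fun _ => g))).Finite :=
  ⟨fun _ hd hodd _ hm => mem_degreeSetExp_of_odd hr hd hodd hm,
    fun _ _ hd _ hm hdm => mem_degreeSetExp_of_even hr hd hm hdm,
    finite_degreeSet_diff_degreeSetExp hr⟩

/-- Suppose `H ≤ Fₙ` has rank `r ≥ 2` and `D_g ≠ ∅`.  If `D_g` contains an odd `d`, every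
integer `≥ 3d` lies in `D_g^{ex}`; if `D_g` contains only even numbers and `d ∈ D_g`,
every even integer `≥ 2d` lies in `D_g^{ex}`.  In particular `D_g \ D_g^{ex}` is finite. -/
theorem stmt15 {n r : ℕ} (hr : 2 ≤ r) (h : Fin r → FreeGroup (Fin n))
    (hbasis : Function.Injective (FreeGroup.lift h)) (g : FreeGroup (Fin n))
    (hne : (degreeSet (FreeGroup.lift (Sum.elim h fun _ => g))).Nonempty) :
    (∀ d ∈ degreeSet (FreeGroup.lift (Sum.elim h fun _ => g)), Odd d →
        ∀ m : ℕ, 3 * d ≤ m → m ∈ degreeSetExp (FreeGroup.lift (Sum.elim h fun _ => g))) ∧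
    ((∀ d ∈ degreeSet (FreeGroup.lift (Sum.elim h fun _ => g)), Even d) →
        ∀ d ∈ degreeSet (FreeGroup.lift (Sum.elim h fun _ => g)), ∀ m : ℕ, Even m →
          2 * d ≤ m → m ∈ degreeSetExp (FreeGroup.lift (Sum.elim h fun _ => g))) ∧
    (degreeSet (FreeGroup.lift (Sum.elim h fun _ => g)) \
      degreeSetExp (FreeGroup.lift (Sum.elim h fun _ => g))).Finite :=
  stmt15_general hr h g
end
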